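/- For every invertible real d×d matrix A with ‖A‖ < 1 (operator norm) and every N ≥ 2 tuple (A₁,…,A_N) with max_i ‖A_i‖ < 1, the function s ↦ P_{φ^s}(A₁,…,A_N) on [0,∞) is continuous, strictly decreasing where it is finite and positive at s=0 (equal to log N), tends to −∞, and hence has a unique zero (the affinity dimension). -/

import Mathlib

open Matrix Filter
open scoped Matrix.Norms.L2Operator

/-- The operator norm of a square real matrix, induced by the Euclidean norm. -/
noncomputable def opNorm {n : Type*} [Fintype n] [DecidableEq n]
    (M : Matrix n n ℝ) : ℝ :=
  ‖Matrix.toEuclideanCLM (𝕜 := ℝ) M‖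

/-- The singular values of a square real matrix `M`, listed in decreasing order. -/
noncomputable def svals {d : ℕ} (M : Matrix (Fin d) (Fin d) ℝ) : Fin d → ℝ :=
  fun i =>
    (fun j => Real.sqrt ((Matrix.isHermitian_conjTranspose_mul_self M).eigenvalues j))
      (Tuple.sort (fun j => Real.sqrt
        ((Matrix.isHermitian_conjTranspose_mul_self M).eigenvalues j)) i.rev)

/-- `σ_{i+1}(M)` with the convention that out-of-range indices give `0`. -/
noncomputable def svalN {d : ℕ} (M : Matrix (Fin d) (Fin d) ℝ) (i : ℕ) : ℝ :=
  if h : i < d then svals M ⟨i, h⟩ else 0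

/-- The singular value function `φ^s(A) = σ₁(A)⋯σ_{⌊s⌋}(A)·σ_{⌈s⌉}(A)^{s-⌊s⌋}`
for `0 ≤ s ≤ d`, and `φ^s(A) = |det A|^{s/d}` for `s ≥ d`. -/
noncomputable def phi {d : ℕ} (s : ℝ) (A : Matrix (Fin d) (Fin d) ℝ) : ℝ :=
  if s ≤ d then
    (∏ i ∈ Finset.range ⌊s⌋₊, svalN A i) * (svalN A (⌈s⌉₊ - 1)) ^ (s - ⌊s⌋₊)
  else |A.det| ^ (s / d)

namespace PressureAux

lemma toECLM_apply {d : ℕ} (M : Matrix (Fin d) (Fin d) ℝ) (x : EuclideanSpace ℝ (Fin d)) :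
    Matrix.toEuclideanCLM (𝕜 := ℝ) M x = (WithLp.equiv _ _).symm (M *ᵥ ⇑x) := by
  rfl

lemma eig_bounds {d : ℕ} {B : Matrix (Fin d) (Fin d) ℝ} (hB : IsUnit B) (j : Fin d) :
    0 < opNorm B⁻¹ ∧
    (opNorm B⁻¹)⁻¹ ≤ Real.sqrt ((Matrix.isHermitian_conjTranspose_mul_self B).eigenvalues j) ∧
    Real.sqrt ((Matrix.isHermitian_conjTranspose_mul_self B).eigenvalues j) ≤ opNorm B := by
  classical
  set hH := Matrix.isHermitian_conjTranspose_mul_self B with hHdef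
  set v : EuclideanSpace ℝ (Fin d) := hH.eigenvectorBasis j with hv
  set μ : ℝ := hH.eigenvalues j with hμ
  have hv1 : ‖v‖ = 1 := hH.eigenvectorBasis.orthonormal.1 j
  set T := Matrix.toEuclideanCLM (𝕜 := ℝ) B with hT
  have hMv : Matrix.toEuclideanCLM (𝕜 := ℝ) (Bᴴ * B) v = μ • v := by
    rw [toECLM_apply]
    rw [hH.mulVec_eigenvectorBasis j]
    rfl
  have h2 : (ContinuousLinearMap.adjoint T) (T v) = μ • v := by
    rw [← ContinuousLinearMap.star_eq_adjoint, hT, ← map_star, ← hMv]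
    have hsb : (star B) * B = Bᴴ * B := rfl
    rw [← hsb, _root_.map_mul]
    rfl
  have hTv2 : ‖T v‖ ^ 2 = μ := by
    have h1 : (inner ℝ (T v) (T v) : ℝ) = inner ℝ v ((ContinuousLinearMap.adjoint T) (T v)) := by
      rw [ContinuousLinearMap.adjoint_inner_right]
    have hvv : (inner ℝ v v : ℝ) = 1 := by
      rw [real_inner_self_eq_norm_sq, hv1]; norm_num
    rw [h2, real_inner_smul_right, hvv, mul_one] at h1
    rw [← real_inner_self_eq_norm_sq, h1]
  have hTvnn : 0 ≤ ‖T v‖ := norm_nonneg _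
  have hsq : Real.sqrt μ = ‖T v‖ := by
    rw [← hTv2, Real.sqrt_sq hTvnn]
  have hup : ‖T v‖ ≤ opNorm B := by
    have := T.le_opNorm v
    rwa [hv1, mul_one] at this
  have hBinv : B⁻¹ * B = 1 := Matrix.nonsing_inv_mul B ((Matrix.isUnit_iff_isUnit_det B).mp hB)
  have hlow : 1 ≤ opNorm B⁻¹ * ‖T v‖ := by
    have hcomp : Matrix.toEuclideanCLM (𝕜 := ℝ) B⁻¹ (T v) = v := by
      rw [hT, ← ContinuousLinearMap.mul_apply, ← _root_.map_mul, hBinv, _root_.map_one,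
        ContinuousLinearMap.one_apply]
    have := (Matrix.toEuclideanCLM (𝕜 := ℝ) B⁻¹).le_opNorm (T v)
    rw [hcomp, hv1] at this
    exact this
  have hopos : 0 < opNorm B⁻¹ := by
    by_contra h
    push_neg at h
    have : opNorm B⁻¹ * ‖T v‖ ≤ 0 := mul_nonpos_of_nonpos_of_nonneg h hTvnn
    linarith
  refine ⟨hopos, ?_, by rw [hsq]; exact hup⟩
  rw [hsq, inv_le_iff_one_le_mul₀ hopos]
  linarith [hlow]

lemma svalN_bounds {d : ℕ} {B : Matrix (Fin d) (Fin d) ℝ} (hB : IsUnit B)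
    {i : ℕ} (hi : i < d) :
    0 < svalN B i ∧ (opNorm B⁻¹)⁻¹ ≤ svalN B i ∧ svalN B i ≤ opNorm B := by
  have h := eig_bounds hB (Tuple.sort (fun j => Real.sqrt
    ((Matrix.isHermitian_conjTranspose_mul_self B).eigenvalues j)) (⟨i, hi⟩ : Fin d).rev)
  have he : svalN B i = Real.sqrt ((Matrix.isHermitian_conjTranspose_mul_self B).eigenvalues
      (Tuple.sort (fun j => Real.sqrt
        ((Matrix.isHermitian_conjTranspose_mul_self B).eigenvalues j)) (⟨i, hi⟩ : Fin d).rev)) := by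
    rw [svalN, dif_pos hi]; rfl
  rw [he]
  exact ⟨lt_of_lt_of_le (inv_pos.mpr h.1) h.2.1, h.2.1, h.2.2⟩

lemma abs_det_eq_prod_svals {d : ℕ} (B : Matrix (Fin d) (Fin d) ℝ) :
    |B.det| = ∏ i : Fin d, svals B i := by
  classical
  set hH := Matrix.isHermitian_conjTranspose_mul_self B with hHdef
  set g : Fin d → ℝ := fun j => Real.sqrt (hH.eigenvalues j) with hg
  have hgnn : ∀ j, 0 ≤ g j := fun j => Real.sqrt_nonneg _
  have h1 : ∏ i : Fin d, svals B i = ∏ j, g j :=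
    Equiv.prod_comp (Fin.revPerm.trans (Tuple.sort g)) g
  have heignn : ∀ j, 0 ≤ hH.eigenvalues j :=
    fun j => Matrix.eigenvalues_conjTranspose_mul_self_nonneg B j
  have h2 : (∏ j, g j) ^ 2 = ∏ j, hH.eigenvalues j := by
    rw [← Finset.prod_pow]
    exact Finset.prod_congr rfl fun j _ => Real.sq_sqrt (heignn j)
  have h3 : (∏ j, hH.eigenvalues j) = (B.det) ^ 2 := by
    have := hH.det_eq_prod_eigenvalues
    have hdet : (Bᴴ * B).det = B.det * B.det := by
      rw [Matrix.det_mul, Matrix.det_conjTranspose, star_trivial]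
    rw [hdet] at this
    simp only [RCLike.ofReal_real_eq_id, id_eq] at this
    rw [← this]; ring
  rw [h1, ← Real.sqrt_sq (Finset.prod_nonneg fun j _ => hgnn j), h2, h3,
    Real.sqrt_sq_eq_abs]

lemma abs_det_eq_prod_svalN {d : ℕ} (B : Matrix (Fin d) (Fin d) ℝ) :
    |B.det| = ∏ i ∈ Finset.range d, svalN B i := by
  rw [abs_det_eq_prod_svals B, ← Fin.prod_univ_eq_prod_range (fun i => svalN B i) d]
  exact Finset.prod_congr rfl fun i _ => by simp [svalN, i.is_lt]

noncomputable def expo (d : ℕ) (i : ℕ) (s : ℝ) : ℝ :=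
  if s ≤ d then min 1 (max 0 (s - i)) else s / d

lemma sumE (m : ℕ) {s : ℝ} (hs : 0 ≤ s) :
    ∑ i ∈ Finset.range m, min 1 (max 0 (s - i)) = min s m := by
  induction m with
  | zero => simp [min_eq_right hs]
  | succ m ih =>
    rw [Finset.sum_range_succ, ih]
    rcases le_total s m with h | h
    · have h0 : max 0 (s - m) = 0 := max_eq_left (by linarith)
      rw [min_eq_left h, h0, min_eq_right (by norm_num : (0:ℝ) ≤ 1), add_zero,
        min_eq_left (by push_cast; linarith)]
    · rcases le_total ((m:ℝ) + 1) s with h2 | h2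
      · have h0 : max 0 (s - m) = s - m := max_eq_right (by linarith)
        rw [min_eq_right h, h0, min_eq_left (by linarith),
          min_eq_right (by push_cast; linarith)]
        push_cast; ring
      · have h0 : max 0 (s - m) = s - m := max_eq_right (by linarith)
        rw [min_eq_right h, h0, min_eq_right (by linarith),
          min_eq_left (by push_cast; linarith)]
        push_cast; ring

lemma sum_expo {d : ℕ} (hd : 1 ≤ d) {s : ℝ} (hs : 0 ≤ s) :
    ∑ i ∈ Finset.range d, expo d i s = s := by
  by_cases hsd : s ≤ d
  · simp only [expo, if_pos hsd]
    rw [sumE d hs, min_eq_left hsd]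
  · simp only [expo, if_neg hsd]
    rw [Finset.sum_const, Finset.card_range, nsmul_eq_mul]
    field_simp

lemma expo_mono (d i : ℕ) (hd : 1 ≤ d) {s t : ℝ} (hs : 0 ≤ s) (hst : s ≤ t) :
    expo d i s ≤ expo d i t := by
  unfold expo
  have hd' : (0:ℝ) < d := by exact_mod_cast hd
  by_cases h1 : s ≤ d <;> by_cases h2 : t ≤ d
  · rw [if_pos h1, if_pos h2]
    exact min_le_min le_rfl (max_le_max le_rfl (by linarith))
  · rw [if_pos h1, if_neg h2]
    push_neg at h2
    calc min 1 (max 0 (s - i)) ≤ 1 := min_le_left _ _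
      _ ≤ t / d := by rw [le_div_iff₀ hd']; linarith
  · push_neg at h1; linarith
  · rw [if_neg h1, if_neg h2]
    gcongr

lemma ceil_of_between {s : ℝ} {k : ℕ} (h1 : (k:ℝ) < s) (h2 : s < k+1) : ⌈s⌉₊ = k + 1 := by
  rw [Nat.ceil_eq_iff (by omega)]
  constructor
  · simpa using h1
  · push_cast; linarith

lemma phiEq {d : ℕ} (hd : 1 ≤ d) (B : Matrix (Fin d) (Fin d) ℝ)
    (hσ : ∀ i, i < d → 0 < svalN B i) {s : ℝ} (hs : 0 ≤ s) :
    phi s B = ∏ i ∈ Finset.range d, (svalN B i) ^ (expo d i s) := by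
  by_cases hsd : s ≤ d
  · simp only [phi, if_pos hsd, expo]
    set k := ⌊s⌋₊ with hk
    have hks : (k : ℝ) ≤ s := Nat.floor_le hs
    have hsk1 : s < k + 1 := Nat.lt_floor_add_one s
    have hkd : k ≤ d := by
      have : (k:ℝ) ≤ (d:ℝ) := le_trans hks hsd
      exact_mod_cast this
    have hsplit : ∏ i ∈ Finset.range d, (svalN B i) ^ (min 1 (max 0 (s - i))) =
        (∏ i ∈ Finset.range k, (svalN B i) ^ (min 1 (max 0 (s - i)))) *
        ∏ i ∈ Finset.Ico k d, (svalN B i) ^ (min 1 (max 0 (s - i))) := by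
      rw [Finset.range_eq_Ico, ← Finset.prod_Ico_consecutive _ (Nat.zero_le k) hkd,
        ← Finset.range_eq_Ico]
    have hfirst : ∀ i ∈ Finset.range k, (svalN B i) ^ (min 1 (max 0 (s - i))) = svalN B i := by
      intro i hi
      have hik : i < k := Finset.mem_range.mp hi
      have h1 : (1:ℝ) ≤ s - i := by
        have : (i:ℝ) + 1 ≤ k := by exact_mod_cast hik
        linarith
      rw [min_eq_left (le_trans h1 (le_max_right _ _)), Real.rpow_one]
    rw [hsplit, Finset.prod_congr rfl hfirst]
    rcases eq_or_lt_of_le hkd with hkdeq | hkdlt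
    · have hsd' : s = k := by
        have h5 : (d:ℝ) ≤ s := by rw [← hkdeq] at hsd ⊢; exact hks
        have h6 : s ≤ (k:ℝ) := by rw [hkdeq]; exact hsd
        linarith
      rw [hsd']
      simp [hkdeq]
    · have hIco : ∏ i ∈ Finset.Ico k d, (svalN B i) ^ (min 1 (max 0 (s - i))) =
          (svalN B k) ^ (s - k) := by
        rw [Finset.prod_eq_single_of_mem k (Finset.mem_Ico.mpr ⟨le_rfl, hkdlt⟩)]
        · congr 1
          rw [max_eq_right (by linarith), min_eq_right (by linarith)]
        · intro i hi hne
          have hik : k < i := lt_of_le_of_ne (Finset.mem_Ico.mp hi).1 (Ne.symm hne)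
          have : s - i < 0 := by
            have : (k:ℝ) + 1 ≤ i := by exact_mod_cast hik
            linarith
          rw [max_eq_left (by linarith), min_eq_right (by norm_num), Real.rpow_zero]
      rw [hIco]
      rcases eq_or_lt_of_le hks with hek | hlt
      · rw [← hek]
        simp [Real.rpow_zero]
      · have hceil : ⌈s⌉₊ - 1 = k := by rw [ceil_of_between hlt hsk1]; omega
        rw [hceil]
  · simp only [phi, if_neg hsd, expo]
    push_neg at hsd
    have hnn : ∀ i ∈ Finset.range d, 0 ≤ svalN B i :=
      fun i hi => (hσ i (Finset.mem_range.mp hi)).le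
    rw [abs_det_eq_prod_svalN B]
    exact (Real.finset_prod_rpow _ _ hnn _).symm

lemma phi_pos {d : ℕ} (hd : 1 ≤ d) (B : Matrix (Fin d) (Fin d) ℝ)
    (hσ : ∀ i, i < d → 0 < svalN B i) {s : ℝ} (hs : 0 ≤ s) : 0 < phi s B := by
  rw [phiEq hd B hσ hs]
  exact Finset.prod_pos fun i hi => Real.rpow_pos_of_pos (hσ i (Finset.mem_range.mp hi)) _

lemma phi_zero {d : ℕ} (B : Matrix (Fin d) (Fin d) ℝ) : phi 0 B = 1 := by
  simp [phi, Real.rpow_zero]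

lemma phi_sandwich {d : ℕ} (hd : 1 ≤ d) (B : Matrix (Fin d) (Fin d) ℝ)
    (hσ : ∀ i, i < d → 0 < svalN B i) {c C : ℝ} (hc : 0 < c) (hC : 0 < C)
    (hlow : ∀ i, i < d → c ≤ svalN B i) (hup : ∀ i, i < d → svalN B i ≤ C)
    {s t : ℝ} (hs : 0 ≤ s) (hst : s ≤ t) :
    phi t B ≤ phi s B * C ^ (t - s) ∧ phi s B * c ^ (t - s) ≤ phi t B := by
  have ht : 0 ≤ t := le_trans hs hst
  rw [phiEq hd B hσ hs, phiEq hd B hσ ht]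
  set δ : ℕ → ℝ := fun i => expo d i t - expo d i s with hδ
  have hδnn : ∀ i, 0 ≤ δ i := fun i => sub_nonneg.mpr (expo_mono d i hd hs hst)
  have hsum : ∑ i ∈ Finset.range d, δ i = t - s := by
    simp only [hδ, Finset.sum_sub_distrib]
    rw [sum_expo hd hs, sum_expo hd ht]
  have hsplit : ∏ i ∈ Finset.range d, svalN B i ^ expo d i t =
      (∏ i ∈ Finset.range d, svalN B i ^ expo d i s) *
      ∏ i ∈ Finset.range d, svalN B i ^ δ i := by
    rw [← Finset.prod_mul_distrib]
    refine Finset.prod_congr rfl fun i hi => ?_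
    rw [← Real.rpow_add (hσ i (Finset.mem_range.mp hi))]
    congr 1; simp [hδ]
  have hpos : 0 < ∏ i ∈ Finset.range d, svalN B i ^ expo d i s :=
    Finset.prod_pos fun i hi => Real.rpow_pos_of_pos (hσ i (Finset.mem_range.mp hi)) _
  have key : ∀ (x : ℝ), 0 < x → (∏ i ∈ Finset.range d, x ^ δ i) = x ^ (t - s) := by
    intro x hx
    rw [← hsum]
    simp_rw [Real.rpow_def_of_pos hx]
    rw [← Real.exp_sum, Finset.mul_sum]
  constructor
  · rw [hsplit]
    refine mul_le_mul_of_nonneg_left ?_ hpos.le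
    rw [← key C hC]
    exact Finset.prod_le_prod (fun i hi => Real.rpow_nonneg (hσ i (Finset.mem_range.mp hi)).le _)
      (fun i hi => Real.rpow_le_rpow (hσ i (Finset.mem_range.mp hi)).le
        (hup i (Finset.mem_range.mp hi)) (hδnn i))
  · rw [hsplit]
    refine mul_le_mul_of_nonneg_left ?_ hpos.le
    rw [← key c hc]
    exact Finset.prod_le_prod (fun i hi => Real.rpow_nonneg hc.le _)
      (fun i hi => Real.rpow_le_rpow hc.le (hlow i (Finset.mem_range.mp hi)) (hδnn i))

lemma opNorm_mul_le {d : ℕ} (X Y : Matrix (Fin d) (Fin d) ℝ) :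
    opNorm (X * Y) ≤ opNorm X * opNorm Y := by
  unfold opNorm
  rw [_root_.map_mul]
  exact norm_mul_le _ _

lemma list_bounds {d : ℕ} {a b : ℝ} (ha : 0 ≤ a) (hb : 0 ≤ b)
    (L : List (Matrix (Fin d) (Fin d) ℝ))
    (h : ∀ M ∈ L, IsUnit M ∧ opNorm M ≤ a ∧ opNorm M⁻¹ ≤ b) :
    IsUnit L.prod ∧ opNorm L.prod ≤ a ^ L.length ∧ opNorm (L.prod)⁻¹ ≤ b ^ L.length := by
  induction L with
  | nil =>
    refine ⟨isUnit_one, ?_, ?_⟩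
    · simp only [List.prod_nil, List.length_nil, pow_zero]
      rw [opNorm, _root_.map_one]
      exact ContinuousLinearMap.norm_id_le
    · simp only [List.prod_nil, List.length_nil, pow_zero, inv_one]
      rw [opNorm, _root_.map_one]
      exact ContinuousLinearMap.norm_id_le
  | cons M L ih =>
    obtain ⟨hu, hn, hi⟩ := h M List.mem_cons_self
    obtain ⟨ihu, ihn, ihi⟩ := ih (fun X hX => h X (List.mem_cons_of_mem M hX))
    rw [List.prod_cons, List.length_cons]
    have hnn : 0 ≤ opNorm L.prod := norm_nonneg _
    refine ⟨hu.mul ihu, ?_, ?_⟩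
    · calc opNorm (M * L.prod) ≤ opNorm M * opNorm L.prod := opNorm_mul_le _ _
        _ ≤ a * a ^ L.length := mul_le_mul hn ihn hnn ha
        _ = a ^ (L.length + 1) := (pow_succ' a L.length).symm
    · rw [Matrix.mul_inv_rev]
      calc opNorm (L.prod⁻¹ * M⁻¹) ≤ opNorm L.prod⁻¹ * opNorm M⁻¹ := opNorm_mul_le _ _
        _ ≤ b ^ L.length * b := mul_le_mul ihi hi (norm_nonneg _) (pow_nonneg hb _)
        _ = b ^ (L.length + 1) := (pow_succ b L.length).symm

end PressureAux

open PressureAux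

/-- For a tuple `(A₁,…,A_N) ∈ GL_d(ℝ)^N`, `N ≥ 2`, with `max_i ‖A_i‖ < 1`, the pressure
function `s ↦ P_{φ^s}(A₁,…,A_N)` is continuous on `[0,∞)`, strictly decreasing there,
equal to `log N` (hence positive) at `s = 0`, tends to `-∞`, and so has a unique
nonnegative zero (the affinity dimension). -/
theorem pressure_unique_zero {d N : ℕ} (hd : 1 ≤ d) (hN : 2 ≤ N)
    (A : Fin N → Matrix (Fin d) (Fin d) ℝ)
    (hinv : ∀ i, IsUnit (A i)) (hnorm : ∀ i, opNorm (A i) < 1)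
    (P : ℝ → ℝ)
    (hP : ∀ s : ℝ, 0 ≤ s → Tendsto (fun n : ℕ =>
      (1 / (n : ℝ)) * Real.log (∑ f : Fin n → Fin N,
        phi s ((List.ofFn (fun k => A (f k))).prod)))
      atTop (nhds (P s))) :
    ContinuousOn P (Set.Ici 0) ∧ StrictAntiOn P (Set.Ici 0) ∧
    P 0 = Real.log N ∧ 0 < P 0 ∧
    Tendsto P atTop atBot ∧
    ∃! s₀ : ℝ, 0 ≤ s₀ ∧ P s₀ = 0 := by
  classical
  have hN0 : 0 < N := by omega
  haveI : Nonempty (Fin N) := ⟨⟨0, hN0⟩⟩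
  have hne : (Finset.univ : Finset (Fin N)).Nonempty := ⟨⟨0, hN0⟩, Finset.mem_univ _⟩
  set α := Finset.univ.sup' hne (fun i => opNorm (A i)) with hα
  set β := Finset.univ.sup' hne (fun i => opNorm (A i)⁻¹) with hβ
  have hαub : ∀ i, opNorm (A i) ≤ α :=
    fun i => Finset.le_sup' (fun j => opNorm (A j)) (Finset.mem_univ i)
  have hβub : ∀ i, opNorm (A i)⁻¹ ≤ β :=
    fun i => Finset.le_sup' (fun j => opNorm (A j)⁻¹) (Finset.mem_univ i)
  have hα1 : α < 1 := by
    rw [hα, Finset.sup'_lt_iff]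
    exact fun i _ => hnorm i
  have hβpos : 0 < β := lt_of_lt_of_le (eig_bounds (hinv ⟨0, hN0⟩) ⟨0, hd⟩).1 (hβub _)
  have hαpos : 0 < α := by
    obtain ⟨h1, h2, h3⟩ := eig_bounds (hinv ⟨0, hN0⟩) (⟨0, hd⟩ : Fin d)
    exact lt_of_lt_of_le (lt_of_lt_of_le (inv_pos.mpr h1) h2) (le_trans h3 (hαub _))
  have hword : ∀ (n : ℕ) (f : Fin n → Fin N),
      IsUnit ((List.ofFn (fun k => A (f k))).prod) ∧
      opNorm ((List.ofFn (fun k => A (f k))).prod) ≤ α ^ n ∧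
      opNorm ((List.ofFn (fun k => A (f k))).prod)⁻¹ ≤ β ^ n := by
    intro n f
    have h := list_bounds hαpos.le hβpos.le (List.ofFn (fun k => A (f k))) ?_
    · rwa [List.length_ofFn] at h
    · intro M hM
      obtain ⟨k, hk⟩ := List.mem_ofFn.mp hM
      rw [← hk]
      exact ⟨hinv _, hαub _, hβub _⟩
  have hσword : ∀ (n : ℕ) (f : Fin n → Fin N) (i : ℕ), i < d →
      0 < svalN ((List.ofFn (fun k => A (f k))).prod) i ∧
      (β ^ n)⁻¹ ≤ svalN ((List.ofFn (fun k => A (f k))).prod) i ∧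
      svalN ((List.ofFn (fun k => A (f k))).prod) i ≤ α ^ n := by
    intro n f i hi
    obtain ⟨hu, hnb, hib⟩ := hword n f
    obtain ⟨hpos, hlb, hub⟩ := svalN_bounds hu hi
    refine ⟨hpos, le_trans ?_ hlb, le_trans hub hnb⟩
    have h1 := (eig_bounds hu ⟨0, hd⟩).1
    exact inv_anti₀ h1 hib
  have hsumpos : ∀ (n : ℕ) (s : ℝ), 0 ≤ s →
      0 < ∑ f : Fin n → Fin N, phi s ((List.ofFn (fun k => A (f k))).prod) := by
    intro n s hs
    exact Finset.sum_pos (fun f _ => phi_pos hd _ (fun i hi => (hσword n f i hi).1) hs)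
      Finset.univ_nonempty
  have key : ∀ s t : ℝ, 0 ≤ s → s ≤ t → ∀ n : ℕ, 1 ≤ n →
      ((1 / (n : ℝ)) * Real.log (∑ f : Fin n → Fin N,
          phi t ((List.ofFn (fun k => A (f k))).prod))
        ≤ (1 / (n : ℝ)) * Real.log (∑ f : Fin n → Fin N,
          phi s ((List.ofFn (fun k => A (f k))).prod)) + (t - s) * Real.log α) ∧
      ((1 / (n : ℝ)) * Real.log (∑ f : Fin n → Fin N,
          phi s ((List.ofFn (fun k => A (f k))).prod)) - (t - s) * Real.log β
        ≤ (1 / (n : ℝ)) * Real.log (∑ f : Fin n → Fin N,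
          phi t ((List.ofFn (fun k => A (f k))).prod))) := by
    intro s t hs hst n hn
    have hn' : (0:ℝ) < n := by exact_mod_cast hn
    have hSs := hsumpos n s hs
    have hSt := hsumpos n t (le_trans hs hst)
    have hsand : ∀ f : Fin n → Fin N,
        phi t ((List.ofFn (fun k => A (f k))).prod) ≤
          phi s ((List.ofFn (fun k => A (f k))).prod) * (α ^ n) ^ (t - s) ∧
        phi s ((List.ofFn (fun k => A (f k))).prod) * ((β ^ n)⁻¹) ^ (t - s) ≤
          phi t ((List.ofFn (fun k => A (f k))).prod) :=
      fun f => phi_sandwich hd _ (fun i hi => (hσword n f i hi).1)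
        (inv_pos.mpr (pow_pos hβpos n)) (pow_pos hαpos n)
        (fun i hi => (hσword n f i hi).2.1) (fun i hi => (hσword n f i hi).2.2)
        hs hst
    constructor
    · have hsum : (∑ f : Fin n → Fin N, phi t ((List.ofFn (fun k => A (f k))).prod)) ≤
          (∑ f : Fin n → Fin N, phi s ((List.ofFn (fun k => A (f k))).prod)) * (α ^ n) ^ (t - s) := by
        rw [Finset.sum_mul]
        exact Finset.sum_le_sum fun f _ => (hsand f).1
      have hlog := Real.log_le_log hSt hsum
      rw [Real.log_mul (ne_of_gt hSs) (ne_of_gt (Real.rpow_pos_of_pos (pow_pos hαpos n) _)),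
        Real.log_rpow (pow_pos hαpos n), Real.log_pow] at hlog
      have h2 := mul_le_mul_of_nonneg_left hlog (le_of_lt (one_div_pos.mpr hn'))
      calc (1 / (n:ℝ)) * Real.log (∑ f : Fin n → Fin N,
            phi t ((List.ofFn (fun k => A (f k))).prod))
          ≤ (1 / (n:ℝ)) * (Real.log (∑ f : Fin n → Fin N,
            phi s ((List.ofFn (fun k => A (f k))).prod)) + (t - s) * ((n:ℝ) * Real.log α)) := h2
        _ = (1 / (n:ℝ)) * Real.log (∑ f : Fin n → Fin N,
            phi s ((List.ofFn (fun k => A (f k))).prod)) + (t - s) * Real.log α := by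
            field_simp
    · have hsum : (∑ f : Fin n → Fin N, phi s ((List.ofFn (fun k => A (f k))).prod))
          * ((β ^ n)⁻¹) ^ (t - s) ≤
          (∑ f : Fin n → Fin N, phi t ((List.ofFn (fun k => A (f k))).prod)) := by
        rw [Finset.sum_mul]
        exact Finset.sum_le_sum fun f _ => (hsand f).2
      have hβn : (0:ℝ) < (β ^ n)⁻¹ := inv_pos.mpr (pow_pos hβpos n)
      have hlog := Real.log_le_log (mul_pos hSs (Real.rpow_pos_of_pos hβn _)) hsum
      rw [Real.log_mul (ne_of_gt hSs) (ne_of_gt (Real.rpow_pos_of_pos hβn _)),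
        Real.log_rpow hβn, Real.log_inv, Real.log_pow] at hlog
      have h2 := mul_le_mul_of_nonneg_left hlog (le_of_lt (one_div_pos.mpr hn'))
      calc (1 / (n:ℝ)) * Real.log (∑ f : Fin n → Fin N,
            phi s ((List.ofFn (fun k => A (f k))).prod)) - (t - s) * Real.log β
          = (1 / (n:ℝ)) * (Real.log (∑ f : Fin n → Fin N,
            phi s ((List.ofFn (fun k => A (f k))).prod)) + (t - s) * -((n:ℝ) * Real.log β)) := by
            field_simp
            ring
        _ ≤ (1 / (n:ℝ)) * Real.log (∑ f : Fin n → Fin N,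
            phi t ((List.ofFn (fun k => A (f k))).prod)) := h2
  have Pineq : ∀ s t : ℝ, 0 ≤ s → s ≤ t →
      P t ≤ P s + (t - s) * Real.log α ∧ P s - (t - s) * Real.log β ≤ P t := by
    intro s t hs hst
    have hTt := hP t (le_trans hs hst)
    have hTs := hP s hs
    constructor
    · refine le_of_tendsto_of_tendsto hTt (hTs.add_const ((t - s) * Real.log α)) ?_
      filter_upwards [eventually_ge_atTop 1] with n hn
      exact (key s t hs hst n hn).1
    · refine le_of_tendsto_of_tendsto (hTs.sub_const ((t - s) * Real.log β)) hTt ?_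
      filter_upwards [eventually_ge_atTop 1] with n hn
      exact (key s t hs hst n hn).2
  have hP0 : P 0 = Real.log N := by
    have h2 : Tendsto (fun n : ℕ => (1 / (n : ℝ)) * Real.log (∑ f : Fin n → Fin N,
        phi 0 ((List.ofFn (fun k => A (f k))).prod))) atTop (nhds (Real.log N)) := by
      refine Tendsto.congr' ?_ tendsto_const_nhds
      filter_upwards [eventually_ge_atTop 1] with n hn
      have hn' : (n:ℝ) ≠ 0 := by
        have : (0:ℝ) < n := by exact_mod_cast hn
        linarith
      simp only [phi_zero]
      rw [Finset.sum_const, Finset.card_univ, nsmul_eq_mul, mul_one]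
      rw [show (Fintype.card (Fin n → Fin N) : ℝ) = ((N:ℝ)) ^ n by
        rw [Fintype.card_fun, Fintype.card_fin, Fintype.card_fin]; push_cast; ring]
      rw [Real.log_pow]
      field_simp
    exact tendsto_nhds_unique (hP 0 le_rfl) h2
  have hlogα : Real.log α < 0 := Real.log_neg hαpos hα1
  have hanti : StrictAntiOn P (Set.Ici 0) := by
    intro s hs t ht hst
    have h := (Pineq s t hs hst.le).1
    have h2 : (t - s) * Real.log α < 0 := mul_neg_of_pos_of_neg (by linarith) hlogα
    linarith
  set K : ℝ := |Real.log α| + |Real.log β| with hK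
  have hKnn : 0 ≤ K := by positivity
  have hKα : Real.log α ≤ K := le_trans (le_abs_self _) (by
    have := abs_nonneg (Real.log β); linarith)
  have hKβ : Real.log β ≤ K := le_trans (le_abs_self _) (by
    have := abs_nonneg (Real.log α); linarith)
  have habs : ∀ x ∈ Set.Ici (0:ℝ), ∀ y ∈ Set.Ici (0:ℝ), y ≤ x →
      |P x - P y| ≤ K * (x - y) := by
    intro x hx y hy hyx
    have h := Pineq y x hy hyx
    rw [abs_le]
    constructor
    · have h2 : (x - y) * Real.log β ≤ (x - y) * K :=
        mul_le_mul_of_nonneg_left hKβ (by linarith)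
      have := h.2
      nlinarith
    · have h2 : (x - y) * Real.log α ≤ (x - y) * K :=
        mul_le_mul_of_nonneg_left hKα (by linarith)
      have := h.1
      nlinarith
  have hlip : LipschitzOnWith (Real.toNNReal K) P (Set.Ici 0) := by
    rw [lipschitzOnWith_iff_dist_le_mul]
    intro x hx y hy
    rw [Real.dist_eq, Real.dist_eq, Real.coe_toNNReal K hKnn]
    rcases le_total y x with h | h
    · rw [abs_of_nonneg (by linarith : (0:ℝ) ≤ x - y)]
      exact habs x hx y hy h
    · rw [abs_of_nonpos (by linarith : x - y ≤ 0), ← abs_sub_comm]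
      have := habs y hy x hx h
      linarith [this]
  have hcont : ContinuousOn P (Set.Ici 0) := hlip.continuousOn
  have hbound : ∀ s : ℝ, 0 ≤ s → P s ≤ Real.log N + s * Real.log α := by
    intro s hs
    have h := (Pineq 0 s le_rfl hs).1
    rwa [hP0, sub_zero] at h
  have hlin : Tendsto (fun s : ℝ => Real.log N + s * Real.log α) atTop atBot := by
    apply tendsto_atBot_add_const_left
    exact Tendsto.atTop_mul_const_of_neg hlogα tendsto_id
  have hbot : Tendsto P atTop atBot := by
    refine tendsto_atBot_mono' atTop ?_ hlin
    filter_upwards [eventually_ge_atTop (0:ℝ)] with s hs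
    exact hbound s hs
  have hP0pos : 0 < P 0 := by
    rw [hP0]
    exact Real.log_pos (by exact_mod_cast hN)
  obtain ⟨T, hT0, hTneg⟩ : ∃ T : ℝ, 0 ≤ T ∧ P T < 0 := by
    obtain ⟨T, hT⟩ := ((hbot.eventually (eventually_lt_atBot (0:ℝ))).and
      (eventually_ge_atTop (0:ℝ))).exists
    exact ⟨T, hT.2, hT.1⟩
  have hconT : ContinuousOn P (Set.Icc 0 T) := hcont.mono Set.Icc_subset_Ici_self
  have hmem : (0:ℝ) ∈ Set.Icc (P T) (P 0) := ⟨hTneg.le, hP0pos.le⟩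
  obtain ⟨s₀, hs₀mem, hs₀⟩ := intermediate_value_Icc' hT0 hconT hmem
  refine ⟨hcont, hanti, hP0, hP0pos, hbot, ⟨s₀, ⟨hs₀mem.1, hs₀⟩, ?_⟩⟩
  rintro y ⟨hy0, hy⟩
  exact hanti.injOn hy0 hs₀mem.1 (by rw [hy, hs₀])
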